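/- For real numbers x_1,...,x_N pairwise distinct and any integer k with 2 ≤ k ≤ N, the sum over ordered pairs i≠j of e_{k-1}^{N-1}(x with coordinate i removed)·x_i·x_j/(x_i - x_j) equals -(k(k-1)/2)·e_k^N(x). -/

import Mathlib

/-!
Pair the terms `(i, j)` and `(j, i)`. With `D` the index set without `i` and `j`,
`e_{k-1}(x without i) = e_{k-1}(D) + x_j e_{k-2}(D)`, so the denominator `x_i - x_j` cancels and
the pair contributes `-x_i x_j e_{k-2}(D)`. Applying `∑_{i ∈ S} x_i e_m(S \ i) = (m+1) e_{m+1}(S)`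
twice then gives `2 · LHS = -k(k-1) e_k`.
-/

open Finset

/-- The elementary symmetric polynomial of degree `k` in the variables indexed by `S`. -/
noncomputable def esym {N : ℕ} (k : ℕ) (S : Finset (Fin N)) (x : Fin N → ℝ) : ℝ :=
  ∑ s ∈ Finset.powersetCard k S, ∏ i ∈ s, x i

theorem Multiset.esymm_cons {R : Type*} [CommSemiring R] (a : R) (s : Multiset R) (n : ℕ) :
    (a ::ₘ s).esymm (n + 1) = s.esymm (n + 1) + a * s.esymm n := by
  simp [Multiset.esymm, Multiset.powersetCard_cons, Multiset.map_map,
    Multiset.sum_map_mul_left]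

section CommSemiring
variable {ι R : Type*} [DecidableEq ι] [CommSemiring R] (f : ι → R)

theorem Finset.esymm_map_val_insert {a : ι} {s : Finset ι} (ha : a ∉ s) (n : ℕ) :
    ((insert a s).val.map f).esymm (n + 1)
      = (s.val.map f).esymm (n + 1) + f a * (s.val.map f).esymm n := by
  rw [insert_val_of_notMem ha, Multiset.map_cons, Multiset.esymm_cons]

theorem Finset.sum_mul_esymm_map_val_erase (s : Finset ι) (n : ℕ) :
    ∑ i ∈ s, f i * ((s.erase i).val.map f).esymm n = (n + 1) * (s.val.map f).esymm (n + 1) := by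
  simp only [esymm_map_val, mul_sum]
  calc ∑ i ∈ s, ∑ t ∈ (s.erase i).powersetCard n, f i * ∏ j ∈ t, f j
      = ∑ t ∈ s.powersetCard (n + 1), ∑ i ∈ t, f i * ∏ j ∈ t.erase i, f j := by
        rw [sum_sigma', sum_sigma']
        apply sum_bij' (fun p _ => ⟨insert p.1 p.2, p.1⟩) (fun q _ => ⟨q.2, q.1.erase q.2⟩)
        all_goals simp only [mem_sigma, mem_powersetCard]; grind [erase_insert, insert_erase]
    _ = ∑ t ∈ s.powersetCard (n + 1), (n + 1) * ∏ j ∈ t, f j := by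
        refine sum_congr rfl fun t ht => ?_
        rw [sum_congr rfl fun i hi => mul_prod_erase t f hi, sum_const, (mem_powersetCard.1 ht).2,
          nsmul_eq_mul]
        push_cast; ring

end CommSemiring

theorem Finset.sum_sum_erase_comm {ι M : Type*} [DecidableEq ι] [AddCommMonoid M] (s : Finset ι)
    (F : ι → ι → M) : ∑ i ∈ s, ∑ j ∈ s.erase i, F j i = ∑ i ∈ s, ∑ j ∈ s.erase i, F i j :=
  sum_comm' fun i j => by simp only [mem_erase]; tauto

section Field
variable {ι K : Type*} [DecidableEq ι] [Field K] (f : ι → K)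

theorem Finset.esymm_map_val_insert_mul_div_sub_add {D : Finset ι} {a b : ι} (ha : a ∉ D)
    (hb : b ∉ D) (hab : f a ≠ f b) (n : ℕ) :
    ((insert b D).val.map f).esymm (n + 1) * f a * f b / (f a - f b)
        + ((insert a D).val.map f).esymm (n + 1) * f b * f a / (f b - f a)
      = -(f a * f b * (D.val.map f).esymm n) := by
  rw [esymm_map_val_insert f ha, esymm_map_val_insert f hb]
  have hsub : f a - f b ≠ 0 := sub_ne_zero.2 hab
  have hsub' : f b - f a ≠ 0 := sub_ne_zero.2 hab.symm
  field_simp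
  ring

theorem Finset.two_mul_sum_sum_erase_esymm_mul_div_sub (s : Finset ι) (hf : Set.InjOn f s)
    (n : ℕ) :
    2 * ∑ i ∈ s, ∑ j ∈ s.erase i, ((s.erase i).val.map f).esymm (n + 1) * f i * f j / (f i - f j)
      = -((n + 1) * (n + 2)) * (s.val.map f).esymm (n + 2) := by
  calc _ = ∑ i ∈ s, ∑ j ∈ s.erase i,
          (((s.erase i).val.map f).esymm (n + 1) * f i * f j / (f i - f j)
            + ((s.erase j).val.map f).esymm (n + 1) * f j * f i / (f j - f i)) := by
        rw [two_mul]
        nth_rewrite 2 [← sum_sum_erase_comm]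
        simp only [← sum_add_distrib]
    _ = ∑ i ∈ s, ∑ j ∈ s.erase i, -(f i * (f j * (((s.erase i).erase j).val.map f).esymm n)) := by
        refine sum_congr rfl fun i hi => sum_congr rfl fun j hj => ?_
        obtain ⟨hji, hjs⟩ := mem_erase.1 hj
        have hij : f i ≠ f j := fun h => hji (hf hi hjs h).symm
        have hsi : s.erase i = insert j ((s.erase i).erase j) := (insert_erase hj).symm
        have hsj : s.erase j = insert i ((s.erase i).erase j) := by
          rw [erase_right_comm, insert_erase (mem_erase.2 ⟨hji.symm, hi⟩)]
        have hpair := esymm_map_val_insert_mul_div_sub_add f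
          (fun h => notMem_erase i s (mem_of_mem_erase h)) (notMem_erase j _) hij n
        rw [← hsi, ← hsj] at hpair
        rw [hpair, mul_assoc]
    _ = -∑ i ∈ s, (n + 1) * (f i * ((s.erase i).val.map f).esymm (n + 1)) := by
        rw [← sum_neg_distrib]
        refine sum_congr rfl fun i _ => ?_
        rw [sum_neg_distrib, ← mul_sum, sum_mul_esymm_map_val_erase]
        ring
    _ = _ := by
        rw [← mul_sum, sum_mul_esymm_map_val_erase]
        push_cast
        ring

end Field

theorem stmt1_general {N : ℕ} (x : Fin N → ℝ)
    (hdist : ∀ i j : Fin N, i ≠ j → x i ≠ x j)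
    (k : ℕ) (hk2 : 2 ≤ k) :
    ∑ i : Fin N, ∑ j ∈ (univ : Finset (Fin N)).erase i,
        esym (k - 1) ((univ : Finset (Fin N)).erase i) x * x i * x j / (x i - x j)
      = -((k : ℝ) * ((k : ℝ) - 1) / 2) * esym k univ x := by
  obtain ⟨n, rfl⟩ : ∃ n, k = n + 2 := ⟨k - 2, by omega⟩
  have h := two_mul_sum_sum_erase_esymm_mul_div_sub x univ
    (fun i _ j _ hx => by_contra fun hij => hdist i j hij hx) n
  simp only [esym, ← esymm_map_val]
  push_cast
  linear_combination h / 2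

theorem stmt1 {N : ℕ} (x : Fin N → ℝ)
    (hdist : ∀ i j : Fin N, i ≠ j → x i ≠ x j)
    (k : ℕ) (hk2 : 2 ≤ k) (hkN : k ≤ N) :
    ∑ i : Fin N, ∑ j ∈ (univ : Finset (Fin N)).erase i,
        esym (k - 1) ((univ : Finset (Fin N)).erase i) x * x i * x j / (x i - x j)
      = -((k : ℝ) * ((k : ℝ) - 1) / 2) * esym k univ x :=
  stmt1_general x hdist k hk2
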